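/- arXiv:2407.05896 — 2 statements merged into one kernel-verified Lean document; each statement's English description precedes it below -/
import Mathlib

section
/- In the MP_d(Λ,Ω) model, for any indices 1 ≤ i < j ≤ d, the covariance of X_i and X_j decomposes over the comonotonic shocks: E[X_i X_j] − E[X_i]·E[X_j] = Σ_{k=1}^{i} ( ∫_{(0,1)} q_{ω_{ik}λ_i}(u)·q_{ω_{jk}λ_j}(u) dμ(u) − ω_{ik}λ_i · ω_{jk}λ_j ), where expectations on the left are taken with respect to the product measure μ^d on (0,1)^d. -/
/-!
The quantile transform `u ↦ min {n | u ≤ F n}` pushes the uniform law on `(0,1)` forward to the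
law on `ℕ` whose cdf is `F`, so each shock `Z_{ik}` is Poisson with mean `ω_{ik} λ_i` and square
integrable. Under `μ^d` the coordinates are independent, so when `cov(X_i, X_j)` is expanded
bilinearly into `Σ_k Σ_l cov(Z_{ik}(u_k), Z_{jl}(u_l))` only the diagonal terms `k = l` survive,
and these are the covariances of the comonotonic pairs `(Z_{ik}, Z_{jk})`.
-/

open MeasureTheory

/-- The uniform probability measure on the open interval (0,1):
Lebesgue measure restricted to (0,1). -/
noncomputable def unif : Measure ℝ := volume.restrict (Set.Ioo (0 : ℝ) 1)

/-- The quantile transform of a cdf `F` on ℕ: `q_F(u) = min {n : u ≤ F n}`. -/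
noncomputable def qt (F : ℕ → ℝ) (u : ℝ) : ℕ := sInf {n : ℕ | u ≤ F n}

/-- The Poisson(λ) cumulative distribution function on ℕ. -/
noncomputable def poisCdf (l : ℝ) (n : ℕ) : ℝ :=
  ∑ k ∈ Finset.range (n + 1), Real.exp (-l) * l ^ k / (Nat.factorial k)

/-- The Poisson(λ) probability mass function on ℕ. -/
noncomputable def poisPmf (l : ℝ) (n : ℕ) : ℝ :=
  Real.exp (-l) * l ^ n / (Nat.factorial n)

/-- `F(n-1)` with the convention `F(-1) = 0`. -/
noncomputable def cdfm1 (F : ℕ → ℝ) (n : ℕ) : ℝ := if n = 0 then 0 else F (n - 1)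

/-- The product measure μ^d of the uniform measure on (0,1) over coordinates. -/
noncomputable def pmeas (d : ℕ) : Measure (Fin d → ℝ) := Measure.pi (fun _ => unif)

/-- Component `i` of the MP_d(Λ,Ω) vector: `X_i(u) = Σ_{j ≤ i} q_{ω_{ij} λ_i}(u_j)`. -/
noncomputable def mpX (d : ℕ) (lam : Fin d → ℝ) (om : Fin d → Fin d → ℝ)
    (i : Fin d) (u : Fin d → ℝ) : ℕ :=
  ∑ j ∈ Finset.Iic i, qt (poisCdf (om i j * lam i)) (u j)

open ProbabilityTheory Set Filter Topology
open scoped NNReal ENNReal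

instance isProbabilityMeasure_unif : IsProbabilityMeasure unif := ⟨by simp [unif]⟩

lemma unif_Iic {a : ℝ} (ha : a ≤ 1) : unif (Iic a) = ENNReal.ofReal a := by
  rw [unif, Measure.restrict_congr_set Ioo_ae_eq_Ioc, Measure.restrict_apply measurableSet_Iic,
    inter_comm, Ioc_inter_Iic, min_eq_right ha, Real.volume_Ioc, sub_zero]

lemma unif_Ici_one : unif (Ici 1) = 0 := by
  rw [unif, Measure.restrict_apply measurableSet_Ici,
    disjoint_iff_inter_eq_empty.mp (disjoint_left.2 fun _ h h' => h'.2.not_ge h), measure_empty]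

lemma qt_le_iff {F : ℕ → ℝ} (hF : Monotone F) {u : ℝ} {n : ℕ} :
    qt F u ≤ n ↔ (∀ m, F m < u) ∨ u ≤ F n := by
  by_cases hS : {m | u ≤ F m}.Nonempty
  · obtain ⟨m, hm⟩ := hS
    have hmem : u ≤ F (qt F u) := Nat.sInf_mem ⟨m, hm⟩
    simp only [show ¬∀ m, F m < u from fun h => (h m).not_ge hm, false_or]
    exact ⟨fun h => hmem.trans (hF h), fun h => Nat.sInf_le h⟩
  · rw [not_nonempty_iff_eq_empty] at hS
    have hall : ∀ m, F m < u := fun m => not_le.mp fun h => (hS ▸ h : m ∈ (∅ : Set ℕ))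
    simp [qt, hS, hall]

lemma preimage_qt_Iic {F : ℕ → ℝ} (hF : Monotone F) (n : ℕ) :
    qt F ⁻¹' Iic n = (⋂ m, Ioi (F m)) ∪ Iic (F n) := by
  ext u; simp [qt_le_iff hF]

lemma measurable_qt {F : ℕ → ℝ} (hF : Monotone F) : Measurable (qt F) :=
  measurable_of_Iic fun n => preimage_qt_Iic hF n ▸
    (MeasurableSet.iInter fun _ => measurableSet_Ioi).union measurableSet_Iic

theorem hasLaw_qt_cdf (P : Measure ℕ) [IsProbabilityMeasure P] :
    HasLaw (qt fun n => P.real (Iic n)) P unif := by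
  set F : ℕ → ℝ := fun n => P.real (Iic n)
  have hF : Monotone F := fun m n h => measureReal_mono (Iic_subset_Iic.2 h)
  have hlim : Tendsto F atTop (𝓝 1) := by
    have := tendsto_measure_iUnion_atTop (μ := P) (fun m n (h : m ≤ n) => Iic_subset_Iic.2 h)
    rw [iUnion_Iic, measure_univ] at this
    exact (ENNReal.tendsto_toReal ENNReal.one_ne_top).comp this
  -- where every `F m < u`, `qt F u = sInf ∅ = 0` is a junk value; this happens only on `[1, ∞)`
  have hsmall : (⋂ m, Ioi (F m)) ⊆ Ici 1 := fun u hu => by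
    by_contra h
    obtain ⟨m, hm⟩ := (hlim.eventually (lt_mem_nhds (not_le.mp h))).exists
    exact (mem_iInter.mp hu m).not_gt hm
  refine ⟨(measurable_qt hF).aemeasurable, Measure.ext_of_Iic _ _ fun n => ?_⟩
  rw [Measure.map_apply (measurable_qt hF) measurableSet_Iic, preimage_qt_Iic hF,
    measure_congr (union_ae_eq_right_of_ae_eq_empty
      (ae_eq_empty.mpr (measure_mono_null hsmall unif_Ici_one))),
    unif_Iic measureReal_le_one, ofReal_measureReal]

section PoissonMoments

open Real Nat

lemma poisCdf_eq_measureReal_Iic (r : ℝ≥0) (n : ℕ) : poisCdf r n = Po(r).real (Iic n) := by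
  rw [← Finset.coe_Iic, ← sum_measureReal_singleton, ← Nat.range_succ_eq_Iic]
  simp [poisCdf, poissonMeasure_real_singleton]

lemma memLp_two_natCast_poissonMeasure (r : ℝ≥0) : MemLp (fun n : ℕ => (n : ℝ)) 2 Po(r) := by
  rw [memLp_two_iff_integrable_sq .of_discrete, integrable_poissonMeasure_iff]
  refine ((Real.summable_pow_div_factorial (4 * r)).mul_left (exp (-r))).of_nonneg_of_le
    (fun n => by positivity) fun n => ?_
  have hn : (n : ℝ) ^ 2 ≤ 4 ^ n := by
    have : (n : ℝ) ≤ 2 ^ n := by exact_mod_cast (Nat.lt_two_pow_self).le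
    calc (n : ℝ) ^ 2 ≤ (2 ^ n) ^ 2 := by gcongr
      _ = 4 ^ n := by rw [← pow_mul, mul_comm, pow_mul]; norm_num
  rw [Real.norm_of_nonneg (by positivity), mul_pow]
  calc rexp (-r) * r ^ n / n ! * (n : ℝ) ^ 2 = rexp (-r) * (r ^ n / n ! * (n : ℝ) ^ 2) := by ring
    _ ≤ rexp (-r) * (r ^ n / n ! * 4 ^ n) := by gcongr
    _ = rexp (-r) * (4 ^ n * r ^ n / n !) := by ring

lemma integral_natCast_poissonMeasure (r : ℝ≥0) : ∫ n, (n : ℝ) ∂Po(r) = r := by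
  rw [integral_poissonMeasure]
  refine ((hasSum_nat_add_iff' 1).mp ?_).tsum_eq
  rw [Finset.sum_range_one, Nat.cast_zero, smul_zero, sub_zero]
  have h := (hasSum_one_poissonMeasure r).mul_left (r : ℝ)
  rw [mul_one] at h
  refine h.congr_fun fun n => ?_
  rw [smul_eq_mul, factorial_succ]
  push_cast
  field_simp
  ring

end PoissonMoments

section Pi

variable {ι : Type*} [Fintype ι] {Ω : ι → Type*} {mΩ : ∀ i, MeasurableSpace (Ω i)}
  {μ : ∀ i, Measure (Ω i)} [∀ i, IsProbabilityMeasure (μ i)]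

lemma memLp_sum_comp_eval {p : ℝ≥0∞} {s : Finset ι} {f : ∀ i, Ω i → ℝ}
    (hf : ∀ k ∈ s, MemLp (f k) p (μ k)) :
    MemLp (fun ω => ∑ k ∈ s, f k (ω k)) p (Measure.pi μ) :=
  memLp_finsetSum s fun k hk => (hf k hk).comp_measurePreserving (measurePreserving_eval μ k)

lemma covariance_sum_comp_eval {s t : Finset ι} (hst : s ⊆ t) {f g : ∀ i, Ω i → ℝ}
    (hf : ∀ k ∈ s, MemLp (f k) 2 (μ k)) (hg : ∀ k ∈ t, MemLp (g k) 2 (μ k)) :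
    cov[fun ω => ∑ k ∈ s, f k (ω k), fun ω => ∑ k ∈ t, g k (ω k); Measure.pi μ]
      = ∑ k ∈ s, cov[f k, g k; μ k] := by
  have hf' : ∀ k ∈ s, MemLp (fun ω : ∀ i, Ω i => f k (ω k)) 2 (Measure.pi μ) := fun k hk =>
    (hf k hk).comp_measurePreserving (measurePreserving_eval μ k)
  have hg' : ∀ k ∈ t, MemLp (fun ω : ∀ i, Ω i => g k (ω k)) 2 (Measure.pi μ) := fun k hk =>
    (hg k hk).comp_measurePreserving (measurePreserving_eval μ k)
  rw [covariance_fun_sum_fun_sum' hf' hg']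
  refine Finset.sum_congr rfl fun k hk => ?_
  rw [Finset.sum_eq_single_of_mem k (hst hk) fun l hl hlk => ?_]
  · exact (measurePreserving_eval μ k).hasLaw.covariance_fun_comp
      (hf k hk).aestronglyMeasurable.aemeasurable (hg k (hst hk)).aestronglyMeasurable.aemeasurable
  · have hindep : IndepFun (fun ω : ∀ i, Ω i => ω k) (fun ω => ω l) (Measure.pi μ) :=
      (iIndepFun_pi (X := fun _ => id) fun _ => aemeasurable_id).indepFun hlk.symm
    refine (hindep.comp₀ (measurable_pi_apply k).aemeasurable (measurable_pi_apply l).aemeasurable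
      ?_ ?_).covariance_eq_zero (hf' k hk) (hg' l hl)
    · rw [(measurePreserving_eval μ k).map_eq]
      exact (hf k hk).aestronglyMeasurable.aemeasurable
    · rw [(measurePreserving_eval μ l).map_eq]
      exact (hg l hl).aestronglyMeasurable.aemeasurable

end Pi

lemma hasLaw_qt_poisCdf {l : ℝ} (hl : 0 ≤ l) : HasLaw (qt (poisCdf l)) Po(l.toNNReal) unif := by
  have hcdf : poisCdf l = fun n => Po(l.toNNReal).real (Iic n) := by
    funext n
    rw [← poisCdf_eq_measureReal_Iic, Real.coe_toNNReal l hl]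
  exact hcdf ▸ hasLaw_qt_cdf _

lemma memLp_two_qt_poisCdf {l : ℝ} (hl : 0 ≤ l) :
    MemLp (fun u => (qt (poisCdf l) u : ℝ)) 2 unif := by
  have hlaw := hasLaw_qt_poisCdf hl
  exact (hlaw.map_eq ▸ memLp_two_natCast_poissonMeasure _).comp_of_map hlaw.aemeasurable

lemma integral_qt_poisCdf {l : ℝ} (hl : 0 ≤ l) : ∫ u, (qt (poisCdf l) u : ℝ) ∂unif = l := by
  calc ∫ u, (qt (poisCdf l) u : ℝ) ∂unif = ∫ n, (n : ℝ) ∂Po(l.toNNReal) :=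
        (hasLaw_qt_poisCdf hl).integral_comp (f := fun n : ℕ => (n : ℝ)) .of_discrete
    _ = l := by rw [integral_natCast_poissonMeasure, Real.coe_toNNReal l hl]

/-- In the MP_d(Λ,Ω) model, for `i < j`, the covariance of `X_i` and `X_j` decomposes over
the comonotonic shocks:
`cov(X_i, X_j) = Σ_{k ≤ i} (cov of the comonotonic pair (Z_{ik}, Z_{jk}))`. -/
theorem mp_cov_decomposition (d : ℕ)
    (lam : Fin d → ℝ) (hlam : ∀ r, 0 < lam r)
    (om : Fin d → Fin d → ℝ)
    (hom0 : ∀ r s : Fin d, s ≤ r → 0 ≤ om r s)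
    (i j : Fin d) (hij : i < j) :
    ∫ u, (mpX d lam om i u : ℝ) * (mpX d lam om j u : ℝ) ∂(pmeas d)
        - (∫ u, (mpX d lam om i u : ℝ) ∂(pmeas d))
            * (∫ u, (mpX d lam om j u : ℝ) ∂(pmeas d))
      = ∑ k ∈ Finset.Iic i,
          (∫ u, (qt (poisCdf (om i k * lam i)) u : ℝ)
              * (qt (poisCdf (om j k * lam j)) u : ℝ) ∂unif
            - (om i k * lam i) * (om j k * lam j)) := by
  have hrate : ∀ r k, k ∈ Finset.Iic r → 0 ≤ om r k * lam r := fun r k hk =>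
    mul_nonneg (hom0 r k (Finset.mem_Iic.mp hk)) (hlam r).le
  have hZ : ∀ r, ∀ k ∈ Finset.Iic r,
      MemLp (fun u => (qt (poisCdf (om r k * lam r)) u : ℝ)) 2 unif := fun r k hk =>
    memLp_two_qt_poisCdf (hrate r k hk)
  have hX : ∀ r, (fun u => (mpX d lam om r u : ℝ))
      = fun u => ∑ k ∈ Finset.Iic r, (qt (poisCdf (om r k * lam r)) (u k) : ℝ) := fun r => by
    simp [mpX]
  have hsub : Finset.Iic i ⊆ Finset.Iic j := Finset.Iic_subset_Iic.mpr hij.le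
  have hXi := hX i ▸ memLp_sum_comp_eval (μ := fun _ => unif) (hZ i)
  have hXj := hX j ▸ memLp_sum_comp_eval (μ := fun _ => unif) (hZ j)
  calc _ = cov[fun u => (mpX d lam om i u : ℝ), fun u => (mpX d lam om j u : ℝ); pmeas d] :=
        (covariance_eq_sub hXi hXj).symm
    _ = ∑ k ∈ Finset.Iic i, cov[fun u => (qt (poisCdf (om i k * lam i)) u : ℝ),
          fun u => (qt (poisCdf (om j k * lam j)) u : ℝ); unif] := by
        rw [hX, hX, pmeas, covariance_sum_comp_eval hsub (hZ i) (hZ j)]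
    _ = _ := Finset.sum_congr rfl fun k hk => by
        rw [covariance_eq_sub (hZ i k hk) (hZ j k (hsub hk)), integral_qt_poisCdf (hrate i k hk),
          integral_qt_poisCdf (hrate j k (hsub hk))]
        rfl
end

section
/- Bivariate model pmf: let λ_1, λ_2 > 0 and ω ∈ [0,1], and on (0,1)^2 with the product measure μ^2 define X_1(u,v) = q_{λ_1}(u) and X_2(u,v) = q_{ωλ_2}(u) + q_{(1−ω)λ_2}(v). Then for all x_1, x_2 ∈ ℕ, μ^2{(u,v) : X_1 = x_1, X_2 = x_2} = Σ_{z=0}^{x_2} c(x_1, x_2 − z) · g_{(1−ω)λ_2}(z), where c(y_1,y_2) = max(0, min{G_{λ_1}(y_1), G_{ωλ_2}(y_2)} − max{G_{λ_1}(y_1 − 1), G_{ωλ_2}(y_2 − 1)}) with the convention G(−1) = 0, and g_θ(z) = e^{−θ} θ^z / z!. -/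
open MeasureTheory

/-
Write `F₁, F₂, F₃` for the three Poisson cdfs. On `(0,1)` the level set `{q_F = n}` is the
interval `(F(n-1), F n]`, so the event splits, according to the value `z` of `q_{F₃}(v)`, into the
disjoint rectangles `((F₁(x₁-1), F₁ x₁] ∩ (F₂(x₂-z-1), F₂(x₂-z)]) × (F₃(z-1), F₃ z]`, whose
uniform measures are `c(x₁, x₂ - z) · g(z)`.
-/

open Filter Function Topology

section QuantileTransform

variable {F : ℕ → ℝ}

lemma cdfm1_nonneg (hF : ∀ n, 0 ≤ F n) (n : ℕ) : 0 ≤ cdfm1 F n := by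
  unfold cdfm1
  split_ifs
  exacts [le_rfl, hF _]

lemma qt_eq_iff_mem_Ioc (hF : Monotone F) {u : ℝ} (hu : 0 < u) (hex : ∃ m, u ≤ F m)
    (n : ℕ) : qt F u = n ↔ u ∈ Set.Ioc (cdfm1 F n) (F n) := by
  have hmem : u ≤ F (qt F u) := Nat.sInf_mem hex
  constructor
  · rintro rfl
    refine ⟨?_, hmem⟩
    unfold cdfm1
    split_ifs with h0
    · exact hu
    · exact lt_of_not_ge fun hle => by
        have : qt F u ≤ qt F u - 1 := Nat.sInf_le hle
        omega
  · rintro ⟨hlow, hup⟩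
    refine le_antisymm (Nat.sInf_le hup) (le_of_not_gt fun hlt => ?_)
    have hne : n ≠ 0 := by omega
    have : F (qt F u) ≤ cdfm1 F n := by
      rw [cdfm1, if_neg hne]
      exact hF (by omega)
    linarith

lemma qt_level_set_ae_eq (hF : Monotone F) (hlim : Tendsto F atTop (𝓝 1)) (n : ℕ) :
    {u | qt F u = n} =ᵐ[unif] Set.Ioc (cdfm1 F n) (F n) := by
  refine eventuallyEq_set.2 ((ae_restrict_mem measurableSet_Ioo).mono fun u hu => ?_)
  exact qt_eq_iff_mem_Ioc hF hu.1 ((hlim.eventually (eventually_ge_nhds hu.2)).exists) n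

lemma nullMeasurableSet_qt_level_set (hF : Monotone F) (hlim : Tendsto F atTop (𝓝 1))
    (n : ℕ) : NullMeasurableSet {u | qt F u = n} unif :=
  measurableSet_Ioc.nullMeasurableSet.congr (qt_level_set_ae_eq hF hlim n).symm

end QuantileTransform

instance : IsProbabilityMeasure unif :=
  ⟨by simp [unif]⟩

lemma unif_Ioc {a b : ℝ} (ha : 0 ≤ a) (hb : b ≤ 1) :
    unif (Set.Ioc a b) = ENNReal.ofReal (b - a) := by
  rw [unif, Measure.restrict_apply measurableSet_Ioc]
  refine le_antisymm ((measure_mono Set.inter_subset_left).trans_eq Real.volume_Ioc) ?_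
  rw [← Real.volume_Ioo]
  exact measure_mono fun u hu =>
    ⟨Set.Ioo_subset_Ioc_self hu, ha.trans_lt hu.1, hu.2.trans_le hb⟩

lemma unif_qt_level_set_inter {F G : ℕ → ℝ} (hF : Monotone F) (hF0 : ∀ n, 0 ≤ F n)
    (hFlim : Tendsto F atTop (𝓝 1)) (hG : Monotone G)
    (hGlim : Tendsto G atTop (𝓝 1)) (m n : ℕ) :
    unif ({u | qt F u = m} ∩ {u | qt G u = n})
      = ENNReal.ofReal (min (F m) (G n) - max (cdfm1 F m) (cdfm1 G n)) := by
  rw [measure_congr ((qt_level_set_ae_eq hF hFlim m).inter (qt_level_set_ae_eq hG hGlim n)),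
    Set.Ioc_inter_Ioc]
  exact unif_Ioc ((cdfm1_nonneg hF0 m).trans (le_max_left _ _))
    ((min_le_left _ _).trans (hF.ge_of_tendsto hFlim m))

lemma unif_qt_level_set {F : ℕ → ℝ} (hF : Monotone F) (hF0 : ∀ n, 0 ≤ F n)
    (hlim : Tendsto F atTop (𝓝 1)) (n : ℕ) :
    unif {u | qt F u = n} = ENNReal.ofReal (F n - cdfm1 F n) := by
  simpa using unif_qt_level_set_inter hF hF0 hlim hF hlim n n

section Poisson

variable {l : ℝ}

lemma poisPmf_nonneg (hl : 0 ≤ l) (n : ℕ) : 0 ≤ poisPmf l n := by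
  unfold poisPmf
  positivity

lemma hasSum_poisPmf (l : ℝ) : HasSum (poisPmf l) 1 := by
  have h := (NormedSpace.expSeries_div_hasSum_exp l).mul_left (Real.exp (-l))
  rw [← Real.exp_eq_exp_ℝ, ← Real.exp_add, neg_add_cancel, Real.exp_zero] at h
  show HasSum (fun n => Real.exp (-l) * l ^ n / n.factorial) 1
  simpa only [mul_div_assoc] using h

lemma tendsto_poisCdf (l : ℝ) : Tendsto (poisCdf l) atTop (𝓝 1) :=
  ((hasSum_poisPmf l).tendsto_sum_nat).comp (tendsto_add_atTop_nat 1)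

lemma poisCdf_nonneg (hl : 0 ≤ l) (n : ℕ) : 0 ≤ poisCdf l n :=
  Finset.sum_nonneg fun k _ => poisPmf_nonneg hl k

lemma monotone_poisCdf (hl : 0 ≤ l) : Monotone (poisCdf l) :=
  monotone_nat_of_le_succ fun _ =>
    Finset.sum_le_sum_of_subset_of_nonneg (Finset.range_subset_range.2 (Nat.le_succ _))
      fun k _ _ => poisPmf_nonneg hl k

lemma poisCdf_sub_cdfm1 (l : ℝ) (n : ℕ) : poisCdf l n - cdfm1 (poisCdf l) n = poisPmf l n := by
  cases n with
  | zero => simp [cdfm1, poisCdf, poisPmf]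
  | succ n => simp [cdfm1, poisCdf, Finset.sum_range_succ _ (n + 1), poisPmf]

lemma unif_qt_poisCdf_level_set (hl : 0 ≤ l) (n : ℕ) :
    unif {u | qt (poisCdf l) u = n} = ENNReal.ofReal (poisPmf l n) := by
  rw [unif_qt_level_set (monotone_poisCdf hl) (poisCdf_nonneg hl) (tendsto_poisCdf l),
    poisCdf_sub_cdfm1]

lemma unif_qt_poisCdf_level_set_inter {l' : ℝ} (hl : 0 ≤ l) (hl' : 0 ≤ l') (m n : ℕ) :
    unif ({u | qt (poisCdf l) u = m} ∩ {u | qt (poisCdf l') u = n})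
      = ENNReal.ofReal (min (poisCdf l m) (poisCdf l' n)
          - max (cdfm1 (poisCdf l) m) (cdfm1 (poisCdf l') n)) :=
  unif_qt_level_set_inter (monotone_poisCdf hl) (poisCdf_nonneg hl) (tendsto_poisCdf l)
    (monotone_poisCdf hl') (tendsto_poisCdf l') m n

lemma nullMeasurableSet_qt_poisCdf_level_set (hl : 0 ≤ l) (n : ℕ) :
    NullMeasurableSet {u | qt (poisCdf l) u = n} unif :=
  nullMeasurableSet_qt_level_set (monotone_poisCdf hl) (tendsto_poisCdf l) n

end Poisson

lemma setOf_eq_and_add_eq_eq_biUnion {α β : Type*} (f g : α → ℕ) (h : β → ℕ) (a b : ℕ) :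
    {p : α × β | f p.1 = a ∧ g p.1 + h p.2 = b}
      = ⋃ z ∈ Finset.range (b + 1), ({u | f u = a} ∩ {u | g u = b - z}) ×ˢ {v | h v = z} := by
  ext ⟨u, v⟩
  simp only [Set.mem_ofPred_eq, Set.mem_iUnion, Finset.mem_range, Set.mem_prod,
    Set.mem_inter_iff, exists_prop]
  constructor
  · rintro ⟨hf, hgh⟩
    exact ⟨h v, by omega, ⟨hf, by omega⟩, rfl⟩
  · rintro ⟨z, hz, ⟨hf, hg⟩, hh⟩
    exact ⟨hf, by omega⟩

lemma pairwise_disjoint_prod_fiber {α β : Type*} (A : ℕ → Set α) (h : β → ℕ) :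
    Pairwise (Disjoint on fun z => A z ×ˢ {v | h v = z}) :=
  fun _ _ hzz' => Set.disjoint_prod.2 <| Or.inr <|
    Set.disjoint_left.2 fun _ hz hz' => hzz' (hz.symm.trans hz')

/-- Bivariate MP model pmf: with `X₁(u,v) = q_{λ₁}(u)` and
`X₂(u,v) = q_{ωλ₂}(u) + q_{(1−ω)λ₂}(v)` on (0,1)² with the product uniform measure,
`P(X₁ = x₁, X₂ = x₂) = Σ_{z=0}^{x₂} c(x₁, x₂ − z) g_{(1−ω)λ₂}(z)`. -/
theorem mp2_pmf (l1 l2 : ℝ) (hl1 : 0 < l1) (hl2 : 0 < l2)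
    (w : ℝ) (hw0 : 0 ≤ w) (hw1 : w ≤ 1) (x1 x2 : ℕ) :
    (unif.prod unif) {p : ℝ × ℝ |
        qt (poisCdf l1) p.1 = x1 ∧
        qt (poisCdf (w * l2)) p.1 + qt (poisCdf ((1 - w) * l2)) p.2 = x2}
      = ENNReal.ofReal (∑ z ∈ Finset.range (x2 + 1),
          max 0 (min (poisCdf l1 x1) (poisCdf (w * l2) (x2 - z))
              - max (cdfm1 (poisCdf l1) x1) (cdfm1 (poisCdf (w * l2)) (x2 - z)))
            * poisPmf ((1 - w) * l2) z) := by
  have hw : 0 ≤ w * l2 := mul_nonneg hw0 hl2.le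
  have hw' : 0 ≤ (1 - w) * l2 := mul_nonneg (sub_nonneg.2 hw1) hl2.le
  rw [setOf_eq_and_add_eq_eq_biUnion,
    measure_biUnion_finset₀
      (((pairwise_disjoint_prod_fiber _ _).mono fun _ _ => Disjoint.aedisjoint).set_pairwise _)
      fun z _ => ((nullMeasurableSet_qt_poisCdf_level_set hl1.le x1).inter
        (nullMeasurableSet_qt_poisCdf_level_set hw _)).prod
        (nullMeasurableSet_qt_poisCdf_level_set hw' z),
    ENNReal.ofReal_sum_of_nonneg fun z _ => mul_nonneg (le_max_left _ _) (poisPmf_nonneg hw' z)]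
  refine Finset.sum_congr rfl fun z _ => ?_
  rw [Measure.prod_prod, unif_qt_poisCdf_level_set_inter hl1.le hw,
    unif_qt_poisCdf_level_set hw', ENNReal.ofReal_mul (le_max_left _ _), ENNReal.ofReal_max,
    ENNReal.ofReal_zero, zero_max]
end
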